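/- arXiv:1106.0857 — 2 statements merged into one kernel-verified Lean document; each statement's English description precedes it below -/
import Mathlib

section
/- Let h be complex-analytic on a neighborhood of 0 ∈ ℂ with h(0) = 0, and suppose that 0 is NOT an isolated point of C(h) = {z : h(z) = conj(z)}. Then |h′(0)| = 1, say h′(0) = exp(iθ) with θ ∈ ℝ, and there exist a neighborhood V of 0, an ε > 0, and an injective real-analytic map γ : (−ε, ε) → ℂ with γ(0) = 0 and γ′(0) a nonzero real multiple of exp(−iθ/2), such that C(h) ∩ V = γ((−ε, ε)) ∩ V. In other words, near the origin C(h) is a real-analytic curve, smooth at the origin and tangent there to the line {s·exp(−iθ/2) : s ∈ ℝ}. -/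
/-!
Write `h̄ = conj ∘ h ∘ conj`, which is holomorphic. On `C(h)` we have `h̄ ∘ h = id`, so by the
identity theorem `h̄ ∘ h = id` near `0`; differentiating gives `conj (h'(0)) · h'(0) = 1`.
Hence `σ z = conj (h z)` is an anti-holomorphic involution near `0` whose fixed points form `C(h)`.
With `h'(0) = exp(iθ)` and `u = exp(iθ/2)`, the holomorphic chart `φ z = u z + conj u · h z` has
`φ'(0) = 2u ≠ 0` and satisfies `φ ∘ σ = conj ∘ φ`. Since `φ` is locally injective, `σ z = z` iff
`φ z` is real, so near `0` the set `C(h)` is the image of a real interval under the analytic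
local inverse of `φ`, whose derivative at `0` is `(2u)⁻¹ = exp(-iθ/2) / 2`.
-/

open Complex Filter Set
open scoped Topology ComplexConjugate

theorem AnalyticAt.conj_conj {f : ℂ → ℂ} {z : ℂ} (hf : AnalyticAt ℂ f z) :
    AnalyticAt ℂ (conj ∘ f ∘ conj) (conj z) := by
  have hconj : Tendsto conj (𝓝 (conj z)) (𝓝 z) := by
    simpa using continuous_conj.tendsto (conj z)
  refine analyticAt_iff_eventually_differentiableAt.mpr ?_
  filter_upwards [hconj.eventually (analyticAt_iff_eventually_differentiableAt.mp hf)] with w hw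
  exact differentiableAt_conj_conj_iff.mpr hw

theorem AnalyticAt.eventually_apply_conj_apply_eq_conj {h : ℂ → ℂ} {a : ℂ}
    (hh : AnalyticAt ℂ h a) (ha : h a = conj a) (hacc : ∃ᶠ z in 𝓝[≠] a, h z = conj z) :
    ∀ᶠ z in 𝓝 a, h (conj (h z)) = conj z := by
  have hcomp : AnalyticAt ℂ ((conj ∘ h ∘ conj) ∘ h) a := by
    refine AnalyticAt.comp ?_ hh
    rw [ha]
    exact hh.conj_conj
  have hfreq : ∃ᶠ z in 𝓝[≠] a, ((conj ∘ h ∘ conj) ∘ h) z = id z :=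
    hacc.mono fun z hz => by simp [hz]
  filter_upwards [(hcomp.frequently_eq_iff_eventually_eq analyticAt_id).mp hfreq] with z hz
  simpa using congrArg conj hz

theorem norm_deriv_eq_one_of_eventually_apply_conj_apply_eq_conj {h : ℂ → ℂ} {a : ℂ}
    (hh : DifferentiableAt ℂ h a) (ha : h a = conj a)
    (hinv : ∀ᶠ z in 𝓝 a, h (conj (h z)) = conj z) :
    ‖deriv h a‖ = 1 := by
  have hchain : HasDerivAt ((conj ∘ h ∘ conj) ∘ h) (conj (deriv h a) * deriv h a) a := by
    have hbar := hh.hasDerivAt.conj_conj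
    rw [← ha] at hbar
    exact hbar.comp a hh.hasDerivAt
  have hid : HasDerivAt ((conj ∘ h ∘ conj) ∘ h) 1 a := by
    refine (hasDerivAt_id a).congr_of_eventuallyEq ?_
    filter_upwards [hinv] with z hz
    simp [hz]
  have hsq : (‖deriv h a‖ : ℂ) ^ 2 = 1 := by
    rw [← conj_mul']
    exact hchain.unique hid
  norm_cast at hsq
  exact (pow_eq_one_iff_of_nonneg (norm_nonneg _) two_ne_zero).mp hsq

def conjChart (u : ℂ) (h : ℂ → ℂ) (z : ℂ) : ℂ :=
  u * z + conj u * h z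

theorem conjChart_conj_apply (u : ℂ) {h : ℂ → ℂ} {z : ℂ} (hz : h (conj (h z)) = conj z) :
    conjChart u h (conj (h z)) = conj (conjChart u h z) := by
  simp only [conjChart, hz, map_add, map_mul, conj_conj]
  ring

theorem AnalyticAt.conjChart (u : ℂ) {h : ℂ → ℂ} {a : ℂ} (hh : AnalyticAt ℂ h a) :
    AnalyticAt ℂ (conjChart u h) a := by
  unfold _root_.conjChart
  fun_prop

theorem HasDerivAt.conjChart {u h' a : ℂ} {h : ℂ → ℂ} (hh : HasDerivAt h h' a)
    (hu : conj u * h' = u) : HasDerivAt (conjChart u h) (2 * u) a := by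
  have hsum := ((hasDerivAt_id a).const_mul u).add (hh.const_mul (conj u))
  rw [mul_one, hu, ← two_mul] at hsum
  exact hsum

theorem conj_exp_half_mul_exp (θ : ℝ) :
    conj (exp ((θ / 2 : ℝ) * I)) * exp (θ * I) = exp ((θ / 2 : ℝ) * I) := by
  rw [← exp_conj, ← exp_add]
  congr 1
  simp only [map_mul, conj_ofReal, conj_I]
  push_cast
  ring

theorem HasStrictDerivAt.eventually_eq_self_iff_conj_eq {φ σ : ℂ → ℂ} {φ' a : ℂ}
    (hφ : HasStrictDerivAt φ φ' a) (hφ' : φ' ≠ 0) (hσ : ContinuousAt σ a) (hσa : σ a = a)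
    (hconj : ∀ᶠ z in 𝓝 a, φ (σ z) = conj (φ z)) :
    ∀ᶠ z in 𝓝 a, σ z = z ↔ conj (φ z) = φ z := by
  obtain ⟨ψ, hψ⟩ : ∃ ψ : ℂ → ℂ, ∀ᶠ z in 𝓝 a, ψ (φ z) = z :=
    ⟨_, hφ.eventually_left_inverse hφ'⟩
  have hσψ : ∀ᶠ z in 𝓝 a, ψ (φ (σ z)) = σ z := by
    rw [ContinuousAt, hσa] at hσ
    exact hσ.eventually hψ
  filter_upwards [hψ, hσψ, hconj] with z hz hσz hφσ
  refine ⟨fun hfix => by rw [← hφσ, hfix], fun hreal => ?_⟩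
  calc σ z = ψ (φ (σ z)) := hσz.symm
    _ = ψ (φ z) := by rw [hφσ, hreal]
    _ = z := hz

theorem exists_analyticCurve_of_eventually_mem_iff_conj_eq {φ : ℂ → ℂ} {S : Set ℂ}
    (hφ : AnalyticAt ℂ φ 0) (hφ0 : φ 0 = 0) (hφ' : deriv φ 0 ≠ 0)
    (hS : ∀ᶠ z in 𝓝 0, z ∈ S ↔ conj (φ z) = φ z) :
    ∃ V ∈ 𝓝 (0 : ℂ), ∃ ε > 0, ∃ γ : ℝ → ℂ, AnalyticOnNhd ℝ γ (Ioo (-ε) ε) ∧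
      InjOn γ (Ioo (-ε) ε) ∧ γ 0 = 0 ∧ HasDerivAt γ (deriv φ 0)⁻¹ 0 ∧
      S ∩ V = γ '' Ioo (-ε) ε ∩ V := by
  set ψ := hφ.hasStrictDerivAt.localInverse φ (deriv φ 0) 0 hφ'
  have hψ_an : ∀ᶠ y in 𝓝 (0 : ℂ), AnalyticAt ℂ ψ y := by
    simpa [hφ0] using (hφ.analyticAt_localInverse hφ').eventually_analyticAt
  have hright : ∀ᶠ y in 𝓝 (0 : ℂ), φ (ψ y) = y := by
    simpa [hφ0] using hφ.hasStrictDerivAt.eventually_right_inverse hφ'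
  have hleft : ∀ᶠ z in 𝓝 (0 : ℂ), ψ (φ z) = z :=
    hφ.hasStrictDerivAt.eventually_left_inverse hφ'
  have hψ0 : ψ 0 = 0 := by simpa [hφ0] using hleft.self_of_nhds
  have hψ' : HasDerivAt ψ (deriv φ 0)⁻¹ 0 := by
    simpa [hφ0] using (hφ.hasStrictDerivAt.to_localInverse hφ').hasDerivAt
  obtain ⟨ε, hε, hball⟩ := Metric.eventually_nhds_iff_ball.mp (hψ_an.and hright)
  obtain ⟨U, hU, hUS⟩ := (hS.and hleft).exists_mem
  have hmem : ∀ t ∈ Ioo (-ε) ε, (t : ℂ) ∈ Metric.ball (0 : ℂ) ε := fun t ht => by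
    simpa [abs_lt] using ht
  have hV : U ∩ φ ⁻¹' Metric.ball 0 ε ∈ 𝓝 (0 : ℂ) := by
    refine inter_mem hU (hφ.continuousAt.preimage_mem_nhds ?_)
    rw [hφ0]
    exact Metric.ball_mem_nhds 0 hε
  refine ⟨_, hV, ε, hε, fun t => ψ t, fun t ht => ?_, fun s hs t ht hst => ?_,
    by simpa using hψ0, by simpa using hψ'.comp_ofReal, ?_⟩
  · exact (hball t (hmem t ht)).1.restrictScalars.comp (ofRealCLM.analyticAt t)
  · exact_mod_cast ((hball s (hmem s hs)).2.symm.trans (congrArg φ hst)).trans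
      (hball t (hmem t ht)).2
  ext z
  constructor
  · rintro ⟨hzS, hzU, hzε⟩
    obtain ⟨t, ht⟩ := conj_eq_iff_real.mp (((hUS z hzU).1).mp hzS)
    rw [mem_preimage, ht] at hzε
    refine ⟨⟨t, by simpa [abs_lt] using hzε, ?_⟩, hzU, ?_⟩
    · show ψ t = z
      rw [← ht]
      exact (hUS z hzU).2
    · rwa [mem_preimage, ht]
  · rintro ⟨⟨t, ht, rfl⟩, hzU, hzε⟩
    refine ⟨(hUS _ hzU).1.mpr ?_, hzU, hzε⟩
    rw [(hball t (hmem t ht)).2, conj_ofReal]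

/-- If `h` is analytic near `0`, `h 0 = 0`, and `0` is not an isolated point of
`C(h) = {z : h z = conj z}`, then `h'(0) = exp(iθ)` for some real `θ`, and near the origin
`C(h)` is a real-analytic curve, smooth at the origin and tangent there to the line
`{s·exp(-iθ/2) : s ∈ ℝ}`. -/
theorem conjugacy_locus_is_smooth_analytic_curve (h : ℂ → ℂ)
    (hh : AnalyticAt ℂ h 0) (h0 : h 0 = 0)
    (hcl : ∀ δ : ℝ, 0 < δ → ∃ z : ℂ, z ≠ 0 ∧ ‖z‖ < δ ∧ h z = (starRingEnd ℂ) z) :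
    ∃ θ : ℝ, deriv h 0 = Complex.exp (θ * Complex.I) ∧
      ∃ V ∈ nhds (0 : ℂ), ∃ ε : ℝ, 0 < ε ∧ ∃ γ : ℝ → ℂ,
        AnalyticOnNhd ℝ γ (Set.Ioo (-ε) ε) ∧
        Set.InjOn γ (Set.Ioo (-ε) ε) ∧
        γ 0 = 0 ∧
        (∃ c : ℝ, c ≠ 0 ∧ deriv γ 0 = (c : ℂ) * Complex.exp (-(θ / 2 : ℝ) * Complex.I)) ∧
        {z : ℂ | h z = (starRingEnd ℂ) z} ∩ V = γ '' (Set.Ioo (-ε) ε) ∩ V := by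
  have hfix0 : h 0 = conj 0 := by rw [h0, map_zero]
  have hacc : ∃ᶠ z in 𝓝[≠] (0 : ℂ), h z = conj z := by
    rw [Metric.nhdsWithin_basis_ball.frequently_iff]
    intro δ hδ
    obtain ⟨z, hz0, hzδ, hz⟩ := hcl δ hδ
    exact ⟨z, ⟨mem_ball_zero_iff.mpr hzδ, hz0⟩, hz⟩
  have hinv := hh.eventually_apply_conj_apply_eq_conj hfix0 hacc
  obtain ⟨θ, hθ⟩ := (norm_eq_one_iff _).mp
    (norm_deriv_eq_one_of_eventually_apply_conj_apply_eq_conj hh.differentiableAt hfix0 hinv)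
  set φ := conjChart (exp ((θ / 2 : ℝ) * I)) h
  have hφ' : HasDerivAt φ (2 * exp ((θ / 2 : ℝ) * I)) 0 :=
    hh.differentiableAt.hasDerivAt.conjChart (hθ ▸ conj_exp_half_mul_exp θ)
  have hφ'0 : deriv φ 0 ≠ 0 := by
    rw [hφ'.deriv]
    exact mul_ne_zero two_ne_zero (exp_ne_zero _)
  have hS : ∀ᶠ z in 𝓝 0, z ∈ {z : ℂ | h z = conj z} ↔ conj (φ z) = φ z := by
    filter_upwards [(hh.conjChart _).hasStrictDerivAt.eventually_eq_self_iff_conj_eq hφ'0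
      (continuous_conj.continuousAt.comp hh.continuousAt) (by simp [h0])
      (hinv.mono fun z => conjChart_conj_apply _)] with z hz
    rw [← hz]
    exact ⟨fun hzC => by simp [hzC], fun hzC => by simpa using congrArg conj hzC⟩
  obtain ⟨V, hV, ε, hε, γ, hγ_an, hγ_inj, hγ0, hγ', hγS⟩ :=
    exists_analyticCurve_of_eventually_mem_iff_conj_eq (hh.conjChart _) (by simp [conjChart, h0])
      hφ'0 hS
  refine ⟨θ, hθ.symm, V, hV, ε, hε, γ, hγ_an, hγ_inj, hγ0, ⟨1 / 2, by norm_num, ?_⟩, hγS⟩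
  rw [hγ'.deriv, hφ'.deriv, mul_inv, ← exp_neg, neg_mul]
  push_cast
  ring
end

section
/- Let a < b be reals and let φ : [a, b] → ℂ be continuous with φ(t) ≠ 0 for all t ∈ [a, b]. Let θ : [a, b] → ℝ be any continuous argument of φ. If the set {t ∈ [a, b] : Im φ(t) = 0} is finite with N elements, then |θ(b) − θ(a)| ≤ (N + 1)·π. -/
open Complex Real

/-! Since `Im φ = ‖φ‖ · sin θ`, every point where `θ` hits a multiple of `π` is a zero of `Im φ`.
By the intermediate value theorem `θ` hits every multiple of `π` between `θ a` and `θ b`, and an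
interval of length `L` contains at least `L / π - 1` such multiples. -/

theorem Int.sub_le_ncard_setOf_cast_mem_Icc_add_one (u v : ℝ) :
    v - u ≤ ({k : ℤ | (k : ℝ) ∈ Set.Icc u v}.ncard : ℝ) + 1 := by
  have hset : {k : ℤ | (k : ℝ) ∈ Set.Icc u v} = ↑(Finset.Icc ⌈u⌉ ⌊v⌋) := by
    ext k
    simp [Int.ceil_le, Int.le_floor]
  rw [hset, Set.ncard_coe_finset, Int.card_Icc]
  have hv := Int.lt_floor_add_one v
  have hu := Int.ceil_lt_add_one u
  have htoNat : ((⌊v⌋ + 1 - ⌈u⌉ : ℤ) : ℝ) ≤ ((⌊v⌋ + 1 - ⌈u⌉).toNat : ℝ) := by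
    exact_mod_cast Int.self_le_toNat _
  push_cast at htoNat
  linarith

theorem Real.sub_le_ncard_sin_eq_zero_add_one_mul_pi (x y : ℝ) :
    y - x ≤ ({z ∈ Set.Icc x y | sin z = 0}.ncard + 1) * π := by
  have hzeros : {z ∈ Set.Icc x y | sin z = 0} =
      (fun k : ℤ ↦ k * π) '' {k : ℤ | (k : ℝ) ∈ Set.Icc (x / π) (y / π)} := by
    ext z
    simp only [Set.mem_image, Set.mem_Icc, Real.sin_eq_zero_iff,
      div_le_iff₀ pi_pos, le_div_iff₀ pi_pos]
    constructor
    · rintro ⟨hz, k, rfl⟩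
      exact ⟨k, hz, rfl⟩
    · rintro ⟨k, hk, rfl⟩
      exact ⟨hk, k, rfl⟩
  have hinj : Function.Injective (fun k : ℤ ↦ (k : ℝ) * π) := fun k l hkl ↦ by
    simpa [pi_ne_zero] using hkl
  rw [hzeros, Set.ncard_image_of_injective _ hinj, ← div_le_iff₀ pi_pos, sub_div]
  exact Int.sub_le_ncard_setOf_cast_mem_Icc_add_one _ _

theorem Real.abs_sub_le_ncard_sin_eq_zero_add_one_mul_pi (x y : ℝ) :
    |y - x| ≤ ({z ∈ Set.uIcc x y | sin z = 0}.ncard + 1) * π := by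
  rw [Set.uIcc, abs_sub_comm, ← max_sub_min_eq_abs']
  exact Real.sub_le_ncard_sin_eq_zero_add_one_mul_pi _ _

theorem Complex.im_eq_norm_mul_sin {z : ℂ} {θ : ℝ} (h : z = ‖z‖ * exp (θ * I)) :
    z.im = ‖z‖ * Real.sin θ := by
  rw [h]
  simp [Complex.mul_im, Complex.exp_ofReal_mul_I_im]

theorem variation_of_argument_bounded_by_zeros_of_imaginary_part_general
    (a b : ℝ) (hab : a < b) (φ : ℝ → ℂ)
    (θ : ℝ → ℝ) (hθ : ContinuousOn θ (Set.Icc a b))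
    (harg : ∀ t ∈ Set.Icc a b, φ t = (‖φ t‖ : ℂ) * Complex.exp ((θ t : ℂ) * Complex.I))
    (N : ℕ) (hfin : {t ∈ Set.Icc a b | (φ t).im = 0}.Finite)
    (hcard : {t ∈ Set.Icc a b | (φ t).im = 0}.ncard = N) :
    |θ b - θ a| ≤ (N + 1) * π := by
  rw [← Set.uIcc_of_le hab.le] at hθ harg hfin hcard
  have hzeros : {z ∈ Set.uIcc (θ a) (θ b) | Real.sin z = 0} ⊆
      θ '' {t ∈ Set.uIcc a b | (φ t).im = 0} := by
    rintro z ⟨hz, hsin⟩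
    obtain ⟨t, ht, rfl⟩ := intermediate_value_uIcc hθ hz
    exact ⟨t, ⟨ht, by rw [im_eq_norm_mul_sin (harg t ht), hsin, mul_zero]⟩, rfl⟩
  have hcount := (Set.ncard_le_ncard hzeros (hfin.image θ)).trans (Set.ncard_image_le hfin)
  calc |θ b - θ a| ≤ ({z ∈ Set.uIcc (θ a) (θ b) | Real.sin z = 0}.ncard + 1) * π :=
        Real.abs_sub_le_ncard_sin_eq_zero_add_one_mul_pi _ _
    _ ≤ (N + 1) * π := by
        gcongr
        exact_mod_cast hcount.trans hcard.le

/-- If `φ : [a, b] → ℂ` is continuous and nonvanishing, `θ` is a continuous argument of `φ`,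
and the imaginary part of `φ` vanishes at exactly `N` points of `[a, b]`, then the variation
of the argument satisfies `|θ(b) - θ(a)| ≤ (N + 1)·π`. -/
theorem variation_of_argument_bounded_by_zeros_of_imaginary_part
    (a b : ℝ) (hab : a < b) (φ : ℝ → ℂ)
    (hφ : ContinuousOn φ (Set.Icc a b))
    (hne : ∀ t ∈ Set.Icc a b, φ t ≠ 0)
    (θ : ℝ → ℝ) (hθ : ContinuousOn θ (Set.Icc a b))
    (harg : ∀ t ∈ Set.Icc a b, φ t = (‖φ t‖ : ℂ) * Complex.exp ((θ t : ℂ) * Complex.I))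
    (N : ℕ) (hfin : {t ∈ Set.Icc a b | (φ t).im = 0}.Finite)
    (hcard : {t ∈ Set.Icc a b | (φ t).im = 0}.ncard = N) :
    |θ b - θ a| ≤ (N + 1) * π :=
  variation_of_argument_bounded_by_zeros_of_imaginary_part_general a b hab φ θ hθ harg N hfin hcard
end
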